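/- arXiv:math/0007203 — 2 statements merged into one kernel-verified Lean document; each statement's English description precedes it below -/
import Mathlib

section
/- Let σ and σ' be 2-dimensional complex representations of a group G. Then (σ ⊗ σ') ⊗ (σ ⊗ σ')^∨ ≅ 𝟙 ⊕ Ad(σ) ⊕ Ad(σ') ⊕ (Ad(σ) ⊗ Ad(σ')), where Ad(τ) := Sym²(τ) ⊗ (det τ)⁻¹ for a 2-dimensional representation τ. -/
open Matrix Kronecker

/-- The symmetric square of a `2 × 2` matrix, acting on the three-dimensional space of
symmetric 2-tensors in the basis `e₁⊗e₁`, `e₁⊗e₂ + e₂⊗e₁`, `e₂⊗e₂`. -/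
def sym2 (A : Matrix (Fin 2) (Fin 2) ℂ) : Matrix (Fin 3) (Fin 3) ℂ :=
  !![A 0 0 ^ 2, 2 * A 0 0 * A 0 1, A 0 1 ^ 2;
     A 0 0 * A 1 0, A 0 0 * A 1 1 + A 0 1 * A 1 0, A 0 1 * A 1 1;
     A 1 0 ^ 2, 2 * A 1 0 * A 1 1, A 1 1 ^ 2]

/-- The adjoint representation `Ad(σ) = Sym²(σ) ⊗ (det σ)⁻¹`. -/
noncomputable def AdRep {G : Type*} [Group G] (σ : G →* GL (Fin 2) ℂ) (g : G) :
    Matrix (Fin 3) (Fin 3) ℂ :=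
  (Matrix.det (σ g : Matrix (Fin 2) (Fin 2) ℂ))⁻¹ • sym2 (σ g : Matrix (Fin 2) (Fin 2) ℂ)

/-- Change of basis realizing `A ⊗ (Aᵀ)⁻¹ ≅ 1 ⊕ Ad A`. -/
noncomputable def TTm : Matrix (Fin 1 ⊕ Fin 3) (Fin 2 × Fin 2) ℂ :=
  Matrix.of fun r c =>
    match r with
    | .inl _ => ![![(1:ℂ)/2, 0], ![0, 1/2]] c.1 c.2
    | .inr i => ![![![(0:ℂ), -1], ![0, 0]],
                  ![![(1:ℂ)/2, 0], ![0, -(1/2)]],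
                  ![![(0:ℂ), 0], ![1, 0]]] i c.1 c.2

/-- Inverse of `TTm`. -/
noncomputable def UUm : Matrix (Fin 2 × Fin 2) (Fin 1 ⊕ Fin 3) ℂ :=
  Matrix.of fun r c =>
    match c with
    | .inl _ => ![![(1:ℂ), 0], ![0, 1]] r.1 r.2
    | .inr j => ![![![(0:ℂ), -1], ![0, 0]],
                  ![![(1:ℂ), 0], ![0, -1]],
                  ![![(0:ℂ), 0], ![1, 0]]] j r.1 r.2

/-- Middle-swap equivalence on `(2×2)×(2×2)` indices. -/
def cEquiv : ((Fin 2 × Fin 2) × Fin 2 × Fin 2) ≃ ((Fin 2 × Fin 2) × Fin 2 × Fin 2) where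
  toFun x := ((x.1.1, x.2.1), (x.1.2, x.2.2))
  invFun x := ((x.1.1, x.2.1), (x.1.2, x.2.2))
  left_inv := fun ⟨⟨_, _⟩, ⟨_, _⟩⟩ => rfl
  right_inv := fun ⟨⟨_, _⟩, ⟨_, _⟩⟩ => rfl

/-- Regrouping equivalence for the four blocks. -/
def gEquiv : (Fin 1 ⊕ (Fin 3 ⊕ (Fin 3 ⊕ Fin 3 × Fin 3))) ≃ ((Fin 1 ⊕ Fin 3) × (Fin 1 ⊕ Fin 3)) where
  toFun x :=
    match x with
    | .inl _ => (.inl 0, .inl 0)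
    | .inr (.inl i) => (.inr i, .inl 0)
    | .inr (.inr (.inl j)) => (.inl 0, .inr j)
    | .inr (.inr (.inr (i, j))) => (.inr i, .inr j)
  invFun x :=
    match x with
    | (.inl _, .inl _) => .inl 0
    | (.inr i, .inl _) => .inr (.inl i)
    | (.inl _, .inr j) => .inr (.inr (.inl j))
    | (.inr i, .inr j) => .inr (.inr (.inr (i, j)))
  left_inv := by
    rintro (i | (i | (j | ⟨i, j⟩))) <;> simp [Fin.fin_one_eq_zero]
  right_inv := by
    rintro ⟨(i | i), (j | j)⟩ <;> simp [Fin.fin_one_eq_zero]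

lemma swap_kron (A B C D : Matrix (Fin 2) (Fin 2) ℂ) :
    ((A ⊗ₖ B) ⊗ₖ (C ⊗ₖ D)).submatrix cEquiv cEquiv = (A ⊗ₖ C) ⊗ₖ (B ⊗ₖ D) := by
  ext ⟨⟨i, j⟩, ⟨m, n⟩⟩ ⟨⟨i', j'⟩, ⟨m', n'⟩⟩
  simp only [Matrix.submatrix_apply, Matrix.kroneckerMap_apply, cEquiv, Equiv.coe_fn_mk]
  ring

set_option maxHeartbeats 1000000 in
lemma TU : TTm * UUm = 1 := by
  ext i j
  rcases i with i | i <;> rcases j with j | j <;> fin_cases i <;> fin_cases j <;>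
    simp [Matrix.mul_apply, Fintype.sum_prod_type, Fin.sum_univ_two, TTm, UUm,
      Matrix.one_apply, Matrix.vecHead, Matrix.vecTail, Function.comp, Prod.ext_iff] <;>
    norm_num [Prod.ext_iff]

set_option maxHeartbeats 1000000 in
lemma UT : UUm * TTm = 1 := by
  ext ⟨i1, i2⟩ ⟨j1, j2⟩
  fin_cases i1 <;> fin_cases i2 <;> fin_cases j1 <;> fin_cases j2 <;>
    simp [Matrix.mul_apply, Fintype.sum_sum_type, Fin.sum_univ_three, Fin.sum_univ_one,
      TTm, UUm, Matrix.one_apply, Matrix.vecHead, Matrix.vecTail, Function.comp,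
      Prod.ext_iff] <;>
    norm_num [Prod.ext_iff]

set_option maxHeartbeats 4000000 in
lemma key (A : Matrix (Fin 2) (Fin 2) ℂ) (hA : IsUnit A.det) :
    TTm * (A ⊗ₖ (Aᵀ)⁻¹) =
      (Matrix.fromBlocks (1 : Matrix (Fin 1) (Fin 1) ℂ) 0 0 (A.det⁻¹ • sym2 A)) * TTm := by
  have ha : A.det ≠ 0 := hA.ne_zero
  have hd : A.det = A 0 0 * A 1 1 - A 0 1 * A 1 0 := Matrix.det_fin_two A
  have ha' : A 0 0 * A 1 1 - A 0 1 * A 1 0 ≠ 0 := hd ▸ ha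
  have hT : (Aᵀ)⁻¹ = A.det⁻¹ • !![A 1 1, -(A 1 0); -(A 0 1), A 0 0] := by
    rw [Matrix.inv_def, Matrix.det_transpose, Matrix.adjugate_fin_two, Ring.inverse_eq_inv']
    ext i j
    fin_cases i <;> fin_cases j <;> simp
  rw [hT]
  ext i ⟨j1, j2⟩
  rcases i with i | i <;> fin_cases i <;> fin_cases j1 <;> fin_cases j2 <;>
    simp only [Matrix.mul_apply, Fintype.sum_prod_type, Fin.sum_univ_two, Fintype.sum_sum_type,
      Fin.sum_univ_three, Fin.sum_univ_one, TTm, Matrix.of_apply,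
      Matrix.kroneckerMap_apply, Matrix.smul_apply, Matrix.fromBlocks_apply₁₁,
      Matrix.fromBlocks_apply₁₂, Matrix.fromBlocks_apply₂₁, Matrix.fromBlocks_apply₂₂,
      Matrix.cons_val', Matrix.cons_val_zero, Matrix.cons_val_one, Matrix.head_cons,
      Matrix.cons_val_fin_one, Matrix.zero_apply, Matrix.one_apply, sym2, smul_eq_mul,
      Matrix.vecHead, Matrix.vecTail, Function.comp, Matrix.cons_val_two, Matrix.cons_val_succ,
      Matrix.tail_cons, Fin.zero_eta, Fin.mk_one, eq_self_iff_true, if_true, Fin.reduceFinMk] <;>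
    rw [hd] <;> field_simp <;> (first | ring1 | (left; ring1))

lemma blocks (M N : Matrix (Fin 3) (Fin 3) ℂ) :
    ((Matrix.fromBlocks (1 : Matrix (Fin 1) (Fin 1) ℂ) 0 0 M) ⊗ₖ
      (Matrix.fromBlocks (1 : Matrix (Fin 1) (Fin 1) ℂ) 0 0 N)).submatrix gEquiv gEquiv =
      Matrix.fromBlocks (1 : Matrix (Fin 1) (Fin 1) ℂ) 0 0
        (Matrix.fromBlocks M 0 0 (Matrix.fromBlocks N 0 0 (M ⊗ₖ N))) := by
  ext i j
  rcases i with i | (i | (i | ⟨i1, i2⟩)) <;> rcases j with j | (j | (j | ⟨j1, j2⟩)) <;>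
    simp [gEquiv, Matrix.kroneckerMap_apply, Matrix.one_apply, Fin.fin_one_eq_zero,
      Prod.ext_iff]

theorem stmt4 (G : Type*) [Group G] (σ σ' : G →* GL (Fin 2) ℂ) :
    ∃ (P : Matrix (Fin 1 ⊕ (Fin 3 ⊕ (Fin 3 ⊕ Fin 3 × Fin 3)))
          ((Fin 2 × Fin 2) × Fin 2 × Fin 2) ℂ)
      (Q : Matrix ((Fin 2 × Fin 2) × Fin 2 × Fin 2)
          (Fin 1 ⊕ (Fin 3 ⊕ (Fin 3 ⊕ Fin 3 × Fin 3))) ℂ),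
      P * Q = 1 ∧ Q * P = 1 ∧
      ∀ g : G,
        P * (((σ g : Matrix (Fin 2) (Fin 2) ℂ) ⊗ₖ (σ' g : Matrix (Fin 2) (Fin 2) ℂ)) ⊗ₖ
              ((((σ g : Matrix (Fin 2) (Fin 2) ℂ) ⊗ₖ
                  (σ' g : Matrix (Fin 2) (Fin 2) ℂ)))ᵀ)⁻¹) =
          (Matrix.fromBlocks (1 : Matrix (Fin 1) (Fin 1) ℂ) 0 0
            (Matrix.fromBlocks (AdRep σ g) 0 0
              (Matrix.fromBlocks (AdRep σ' g) 0 0 (AdRep σ g ⊗ₖ AdRep σ' g)))) * P := by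
  refine ⟨(TTm ⊗ₖ TTm).submatrix gEquiv cEquiv, (UUm ⊗ₖ UUm).submatrix cEquiv gEquiv, ?_, ?_, ?_⟩
  · rw [Matrix.submatrix_mul_equiv, ← Matrix.mul_kronecker_mul, TU,
      Matrix.one_kronecker_one, Matrix.submatrix_one_equiv]
  · rw [Matrix.submatrix_mul_equiv, ← Matrix.mul_kronecker_mul, UT,
      Matrix.one_kronecker_one, Matrix.submatrix_one_equiv]
  · intro g
    set A : Matrix (Fin 2) (Fin 2) ℂ := (σ g : Matrix (Fin 2) (Fin 2) ℂ) with hAdef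
    set B : Matrix (Fin 2) (Fin 2) ℂ := (σ' g : Matrix (Fin 2) (Fin 2) ℂ) with hBdef
    have hA : IsUnit A.det := (Matrix.isUnit_iff_isUnit_det A).mp (σ g).isUnit
    have hB : IsUnit B.det := (Matrix.isUnit_iff_isUnit_det B).mp (σ' g).isUnit
    have htr : ((A ⊗ₖ B)ᵀ)⁻¹ = (Aᵀ)⁻¹ ⊗ₖ (Bᵀ)⁻¹ := by
      rw [← Matrix.kroneckerMap_transpose, Matrix.inv_kronecker]
    rw [htr]
    have hX : (A ⊗ₖ B) ⊗ₖ ((Aᵀ)⁻¹ ⊗ₖ (Bᵀ)⁻¹) =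
        ((A ⊗ₖ (Aᵀ)⁻¹) ⊗ₖ (B ⊗ₖ (Bᵀ)⁻¹)).submatrix cEquiv cEquiv := by
      rw [swap_kron]
    rw [hX, Matrix.submatrix_mul_equiv, ← Matrix.mul_kronecker_mul, key A hA, key B hB,
      Matrix.mul_kronecker_mul, ← Matrix.submatrix_mul_equiv _ _ _ gEquiv _, blocks]
    rfl
end

section
/- Let G be a finite group, H ≤ G a subgroup of index 2, g₀ ∈ G \ H, and μ : H → ℂ* a character with conjugate μ^θ(h) = μ(g₀⁻¹hg₀). Then Sym²(Ind_H^G μ) ≅ Ind_H^G(μ²) ⊕ λ', where λ' : G → ℂ* is the 1-dimensional character with λ'|_H = μ·μ^θ and λ'(g₀) = μ(g₀²). -/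
open Matrix

/-- The matrix of the induced representation `Ind_H^G μ` of a character `μ` of an index-two
subgroup `H`, in the basis corresponding to the coset representatives `1` and `g₀`. -/
noncomputable def IndMat {G : Type*} [Group G] (H : Subgroup G) [DecidablePred (· ∈ H)]
    (g₀ : G) (μ : H →* ℂˣ) (g : G) : Matrix (Fin 2) (Fin 2) ℂ :=
  fun i j =>
    if h : (![(1 : G), g₀] i)⁻¹ * g * (![(1 : G), g₀] j) ∈ H then
      (μ ⟨(![(1 : G), g₀] i)⁻¹ * g * (![(1 : G), g₀] j), h⟩ : ℂ) else 0

noncomputable def nuFun {G : Type*} [Group G] (H : Subgroup G) [DecidablePred (· ∈ H)]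
    (μ : H →* ℂˣ) (x : G) : ℂˣ :=
  if hx : x ∈ H then μ ⟨x, hx⟩ else 1

lemma nu_of_mem {G : Type*} [Group G] {H : Subgroup G} [DecidablePred (· ∈ H)]
    (μ : H →* ℂˣ) {x : G} (hx : x ∈ H) : nuFun H μ x = μ ⟨x, hx⟩ := dif_pos hx

lemma nu_of_not_mem {G : Type*} [Group G] {H : Subgroup G} [DecidablePred (· ∈ H)]
    (μ : H →* ℂˣ) {x : G} (hx : ¬ x ∈ H) : nuFun H μ x = 1 := dif_neg hx

lemma nu_mul {G : Type*} [Group G] {H : Subgroup G} [DecidablePred (· ∈ H)]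
    (μ : H →* ℂˣ) {x y : G} (hx : x ∈ H) (hy : y ∈ H) :
    nuFun H μ (x * y) = nuFun H μ x * nuFun H μ y := by
  rw [nu_of_mem μ (mul_mem hx hy), nu_of_mem μ hx, nu_of_mem μ hy]
  exact map_mul μ ⟨x, hx⟩ ⟨y, hy⟩

noncomputable def lamFun {G : Type*} [Group G] (H : Subgroup G) [DecidablePred (· ∈ H)]
    (g₀ : G) (μ : H →* ℂˣ) (g : G) : ℂˣ :=
  nuFun H μ g * nuFun H μ (g₀⁻¹ * g * g₀) * (nuFun H μ (g * g₀) * nuFun H μ (g₀⁻¹ * g))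


lemma key_diag (a d a2 d2 : ℂ) (h2 : a2 = a * a) (hd2 : d2 = d * d) :
    sym2 !![a, 0; 0, d] * !![1,0,0;0,0,1;0,1,0] =
      !![1,0,0;0,0,1;0,1,0] *
        !![(!![a2, 0; 0, d2] : Matrix (Fin 2) (Fin 2) ℂ) 0 0, !![a2, 0; 0, d2] 0 1, 0;
           (!![a2, 0; 0, d2] : Matrix (Fin 2) (Fin 2) ℂ) 1 0, !![a2, 0; 0, d2] 1 1, 0;
           0, 0, a * d] := by
  subst h2 hd2
  ext i j
  fin_cases i <;> fin_cases j <;>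
    simp [sym2, Matrix.mul_apply, Fin.sum_univ_three, Matrix.vecHead, Matrix.vecTail] <;> ring

lemma key_anti (b c b2 c2 : ℂ) (h2 : b2 = b * b) (hc2 : c2 = c * c) :
    sym2 !![0, b; c, 0] * !![1,0,0;0,0,1;0,1,0] =
      !![1,0,0;0,0,1;0,1,0] *
        !![(!![0, b2; c2, 0] : Matrix (Fin 2) (Fin 2) ℂ) 0 0, !![0, b2; c2, 0] 0 1, 0;
           (!![0, b2; c2, 0] : Matrix (Fin 2) (Fin 2) ℂ) 1 0, !![0, b2; c2, 0] 1 1, 0;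
           0, 0, b * c] := by
  subst h2 hc2
  ext i j
  fin_cases i <;> fin_cases j <;>
    simp [sym2, Matrix.mul_apply, Fin.sum_univ_three, Matrix.vecHead, Matrix.vecTail] <;> ring

theorem stmt18 (G : Type*) [Group G] [Finite G] (H : Subgroup G)
    [DecidablePred (· ∈ H)] (hH : H.index = 2) (g₀ : G) (hg₀ : g₀ ∉ H)
    (μ : H →* ℂˣ) :
    ∃ lam' : G →* ℂˣ,
      (∀ (h : G) (hh : h ∈ H) (hh' : g₀⁻¹ * h * g₀ ∈ H),
        (lam' h : ℂ) = (μ ⟨h, hh⟩ : ℂ) * (μ ⟨g₀⁻¹ * h * g₀, hh'⟩ : ℂ)) ∧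
      (∀ hsq : g₀ * g₀ ∈ H, (lam' g₀ : ℂ) = (μ ⟨g₀ * g₀, hsq⟩ : ℂ)) ∧
      ∃ P : Matrix (Fin 3) (Fin 3) ℂ, IsUnit P ∧
        ∀ g : G,
          sym2 (IndMat H g₀ μ g) * P =
            P * !![IndMat H g₀ (μ * μ) g 0 0, IndMat H g₀ (μ * μ) g 0 1, 0;
                   IndMat H g₀ (μ * μ) g 1 0, IndMat H g₀ (μ * μ) g 1 1, 0;
                   0, 0, (lam' g : ℂ)] := by
  have mm : ∀ a b : G, a * b ∈ H ↔ (a ∈ H ↔ b ∈ H) :=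
    fun a b => Subgroup.mul_mem_iff_of_index_two hH
  have hmul : ∀ a b : G, lamFun H g₀ μ (a * b) = lamFun H g₀ μ a * lamFun H g₀ μ b := by
    intro a b
    by_cases ha : a ∈ H <;> by_cases hb : b ∈ H
    · have hab : a * b ∈ H := by simp only [mm, inv_mem_iff]; tauto
      have h1 : g₀⁻¹ * (a * b) * g₀ ∈ H := by simp only [mm, inv_mem_iff]; tauto
      have h2 : ¬ (a * b * g₀ ∈ H) := by simp only [mm, inv_mem_iff]; tauto
      have h3 : ¬ (g₀⁻¹ * (a * b) ∈ H) := by simp only [mm, inv_mem_iff]; tauto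
      have h4 : ¬ (a * g₀ ∈ H) := by simp only [mm, inv_mem_iff]; tauto
      have h5 : ¬ (g₀⁻¹ * a ∈ H) := by simp only [mm, inv_mem_iff]; tauto
      have h6 : ¬ (b * g₀ ∈ H) := by simp only [mm, inv_mem_iff]; tauto
      have h7 : ¬ (g₀⁻¹ * b ∈ H) := by simp only [mm, inv_mem_iff]; tauto
      have ca : g₀⁻¹ * a * g₀ ∈ H := by simp only [mm, inv_mem_iff]; tauto
      have cb : g₀⁻¹ * b * g₀ ∈ H := by simp only [mm, inv_mem_iff]; tauto
      unfold lamFun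
      rw [nu_of_not_mem μ h2, nu_of_not_mem μ h3, nu_of_not_mem μ h4, nu_of_not_mem μ h5,
        nu_of_not_mem μ h6, nu_of_not_mem μ h7, nu_mul μ ha hb,
        show g₀⁻¹ * (a * b) * g₀ = (g₀⁻¹ * a * g₀) * (g₀⁻¹ * b * g₀) by group,
        nu_mul μ ca cb]
      rw [Units.ext_iff]; push_cast; ring
    · have hab : ¬ (a * b ∈ H) := by simp only [mm, inv_mem_iff]; tauto
      have h1 : ¬ (g₀⁻¹ * (a * b) * g₀ ∈ H) := by simp only [mm, inv_mem_iff]; tauto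
      have h4 : ¬ (a * g₀ ∈ H) := by simp only [mm, inv_mem_iff]; tauto
      have h5 : ¬ (g₀⁻¹ * a ∈ H) := by simp only [mm, inv_mem_iff]; tauto
      have h6 : b * g₀ ∈ H := by simp only [mm, inv_mem_iff]; tauto
      have h7 : g₀⁻¹ * b ∈ H := by simp only [mm, inv_mem_iff]; tauto
      have ca : g₀⁻¹ * a * g₀ ∈ H := by simp only [mm, inv_mem_iff]; tauto
      have cb : ¬ (g₀⁻¹ * b * g₀ ∈ H) := by simp only [mm, inv_mem_iff]; tauto
      unfold lamFun
      rw [nu_of_not_mem μ hab, nu_of_not_mem μ h1, nu_of_not_mem μ h4, nu_of_not_mem μ h5,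
        nu_of_not_mem μ cb, nu_of_not_mem μ hb,
        show a * b * g₀ = a * (b * g₀) by group, nu_mul μ ha h6,
        show g₀⁻¹ * (a * b) = (g₀⁻¹ * a * g₀) * (g₀⁻¹ * b) by group, nu_mul μ ca h7]
      rw [Units.ext_iff]; push_cast; ring
    · have hab : ¬ (a * b ∈ H) := by simp only [mm, inv_mem_iff]; tauto
      have h1 : ¬ (g₀⁻¹ * (a * b) * g₀ ∈ H) := by simp only [mm, inv_mem_iff]; tauto
      have h4 : a * g₀ ∈ H := by simp only [mm, inv_mem_iff]; tauto
      have h5 : g₀⁻¹ * a ∈ H := by simp only [mm, inv_mem_iff]; tauto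
      have h6 : ¬ (b * g₀ ∈ H) := by simp only [mm, inv_mem_iff]; tauto
      have h7 : ¬ (g₀⁻¹ * b ∈ H) := by simp only [mm, inv_mem_iff]; tauto
      have ca : ¬ (g₀⁻¹ * a * g₀ ∈ H) := by simp only [mm, inv_mem_iff]; tauto
      have cb : g₀⁻¹ * b * g₀ ∈ H := by simp only [mm, inv_mem_iff]; tauto
      unfold lamFun
      rw [nu_of_not_mem μ hab, nu_of_not_mem μ h1, nu_of_not_mem μ h6, nu_of_not_mem μ h7,
        nu_of_not_mem μ ca, nu_of_not_mem μ ha,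
        show a * b * g₀ = (a * g₀) * (g₀⁻¹ * b * g₀) by group, nu_mul μ h4 cb,
        show g₀⁻¹ * (a * b) = (g₀⁻¹ * a) * b by group, nu_mul μ h5 hb]
      rw [Units.ext_iff]; push_cast; ring
    · have hab : a * b ∈ H := by simp only [mm, inv_mem_iff]; tauto
      have h1 : g₀⁻¹ * (a * b) * g₀ ∈ H := by simp only [mm, inv_mem_iff]; tauto
      have h2 : ¬ (a * b * g₀ ∈ H) := by simp only [mm, inv_mem_iff]; tauto
      have h3 : ¬ (g₀⁻¹ * (a * b) ∈ H) := by simp only [mm, inv_mem_iff]; tauto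
      have h4 : a * g₀ ∈ H := by simp only [mm, inv_mem_iff]; tauto
      have h5 : g₀⁻¹ * a ∈ H := by simp only [mm, inv_mem_iff]; tauto
      have h6 : b * g₀ ∈ H := by simp only [mm, inv_mem_iff]; tauto
      have h7 : g₀⁻¹ * b ∈ H := by simp only [mm, inv_mem_iff]; tauto
      have ca : ¬ (g₀⁻¹ * a * g₀ ∈ H) := by simp only [mm, inv_mem_iff]; tauto
      have cb : ¬ (g₀⁻¹ * b * g₀ ∈ H) := by simp only [mm, inv_mem_iff]; tauto
      unfold lamFun
      rw [nu_of_not_mem μ h2, nu_of_not_mem μ h3, nu_of_not_mem μ ca, nu_of_not_mem μ cb,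
        nu_of_not_mem μ ha, nu_of_not_mem μ hb,
        show a * b = (a * g₀) * (g₀⁻¹ * b) by group, nu_mul μ h4 h7,
        show g₀⁻¹ * ((a * g₀) * (g₀⁻¹ * b)) * g₀ = (g₀⁻¹ * a) * (b * g₀) by group,
        nu_mul μ h5 h6]
      rw [Units.ext_iff]; push_cast; ring
  refine ⟨MonoidHom.mk' (lamFun H g₀ μ) hmul, ?_, ?_, ?_⟩
  · intro h hh hh'
    have h4 : ¬ (h * g₀ ∈ H) := by simp only [mm, inv_mem_iff]; tauto
    have h5 : ¬ (g₀⁻¹ * h ∈ H) := by simp only [mm, inv_mem_iff]; tauto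
    show ((lamFun H g₀ μ h : ℂˣ) : ℂ) = _
    unfold lamFun
    rw [nu_of_mem μ hh, nu_of_mem μ hh', nu_of_not_mem μ h4, nu_of_not_mem μ h5]
    push_cast; ring
  · intro hsq
    show ((lamFun H g₀ μ g₀ : ℂˣ) : ℂ) = _
    unfold lamFun
    have h5 : g₀⁻¹ * g₀ ∈ H := by simp only [mm, inv_mem_iff]
    have hc : ¬ (g₀⁻¹ * g₀ * g₀ ∈ H) := by simp only [mm, inv_mem_iff]; tauto
    rw [nu_of_not_mem μ hg₀, nu_of_not_mem μ hc, nu_of_mem μ hsq, nu_of_mem μ h5]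
    have h1 : (⟨g₀⁻¹ * g₀, h5⟩ : H) = 1 := Subtype.ext (inv_mul_cancel g₀)
    rw [h1]
    simp
  · refine ⟨!![1,0,0;0,0,1;0,1,0], ?_, ?_⟩
    · apply (Matrix.isUnit_iff_isUnit_det _).mpr
      norm_num [Matrix.det_fin_three, Matrix.vecHead, Matrix.vecTail, Matrix.cons_val_two]
    · intro g
      by_cases hg : g ∈ H
      · have hc : g₀⁻¹ * g * g₀ ∈ H := by simp only [mm, inv_mem_iff]; tauto
        have h01 : ¬ (g * g₀ ∈ H) := by simp only [mm, inv_mem_iff]; tauto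
        have h10 : ¬ (g₀⁻¹ * g ∈ H) := by simp only [mm, inv_mem_iff]; tauto
        have E : ∀ ν : H →* ℂˣ, IndMat H g₀ ν g =
            !![(ν ⟨g, hg⟩ : ℂ), 0; 0, (ν ⟨g₀⁻¹ * g * g₀, hc⟩ : ℂ)] := by
          intro ν
          ext i j
          fin_cases i <;> fin_cases j <;> simp [IndMat, hg, hc, h01, h10]
        have L : ((MonoidHom.mk' (lamFun H g₀ μ) hmul g : ℂˣ) : ℂ) =
            (μ ⟨g, hg⟩ : ℂ) * (μ ⟨g₀⁻¹ * g * g₀, hc⟩ : ℂ) := by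
          show ((lamFun H g₀ μ g : ℂˣ) : ℂ) = _
          unfold lamFun
          rw [nu_of_mem μ hg, nu_of_mem μ hc, nu_of_not_mem μ h01, nu_of_not_mem μ h10]
          push_cast; ring
        rw [E μ, E (μ * μ), L]
        exact key_diag _ _ _ _ (by simp) (by simp)
      · have hc : ¬ (g₀⁻¹ * g * g₀ ∈ H) := by simp only [mm, inv_mem_iff]; tauto
        have h01 : g * g₀ ∈ H := by simp only [mm, inv_mem_iff]; tauto
        have h10 : g₀⁻¹ * g ∈ H := by simp only [mm, inv_mem_iff]; tauto
        have E : ∀ ν : H →* ℂˣ, IndMat H g₀ ν g =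
            !![0, (ν ⟨g * g₀, h01⟩ : ℂ); (ν ⟨g₀⁻¹ * g, h10⟩ : ℂ), 0] := by
          intro ν
          ext i j
          fin_cases i <;> fin_cases j <;> simp [IndMat, hg, hc, h01, h10]
        have L : ((MonoidHom.mk' (lamFun H g₀ μ) hmul g : ℂˣ) : ℂ) =
            (μ ⟨g * g₀, h01⟩ : ℂ) * (μ ⟨g₀⁻¹ * g, h10⟩ : ℂ) := by
          show ((lamFun H g₀ μ g : ℂˣ) : ℂ) = _
          unfold lamFun
          rw [nu_of_mem μ h01, nu_of_mem μ h10, nu_of_not_mem μ hg, nu_of_not_mem μ hc]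
          push_cast; ring
        rw [E μ, E (μ * μ), L]
        exact key_anti _ _ _ _ (by simp) (by simp)
end
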